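/- arXiv:2512.21753 — 2 statements merged into one kernel-verified Lean document; each statement's English description precedes it below -/
import Mathlib

section
/- Let F be the formal power series in t over the polynomial ring ℚ[X] whose n-th coefficient is the polynomial Σ_{i=0}^{n} f(i,n)·X^i. Then F satisfies the algebraic relation (X·t − X²·t² − t²)·F² + (1 − 2·X·t)·F − 1 = 0 in ℚ[X]⟦t⟧. -/
/-- The number of walks of length `n` on the nonnegative integers starting at `0`,
ending at `i`, with steps `+1` or `-1`. -/
noncomputable def walkCount (i n : ℕ) : ℕ :=
  Nat.card {w : Fin (n + 1) → ℕ //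
    w 0 = 0 ∧ w (Fin.last n) = i ∧
    ∀ k : Fin n, ((w k.succ : ℤ) - (w k.castSucc : ℤ)).natAbs = 1}

/-- The full generating function `F(X;t)` as a power series in `t` over `ℚ[X]`. -/
noncomputable def walkGenFun : PowerSeries (Polynomial ℚ) :=
  PowerSeries.mk fun n =>
    ∑ i ∈ Finset.range (n + 1), Polynomial.C (walkCount i n : ℚ) * Polynomial.X ^ i

/-!
Removing the last step of a walk gives `F = 1 + t X F + t (F - F(0; t)) / X`, and this equation
determines `F` coefficient by coefficient. If `C(t) = ∑ catalan n tⁿ`, the series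
`C(t²) / (1 - X t C(t²))` satisfies the same equation, because `C = 1 + t C²`; hence it is `F`.
The quadratic relation for `C(t²) / (1 - X t C(t²))` is again a consequence of `C = 1 + t C²`.
-/

open PowerSeries
open scoped Polynomial

abbrev Walks (n : ℕ) (P : ℕ → Prop) : Type :=
  {w : Fin (n + 1) → ℕ // w 0 = 0 ∧ P (w (Fin.last n)) ∧
    ∀ k : Fin n, ((w k.succ : ℤ) - (w k.castSucc : ℤ)).natAbs = 1}

namespace Walks

variable {n : ℕ} {P Q : ℕ → Prop}

theorem apply_le (w : Walks n P) (k : Fin (n + 1)) : w.1 k ≤ k := by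
  induction k using Fin.induction with
  | zero => simp [w.2.1]
  | succ k ih =>
    have := w.2.2.2 k
    simp only [Fin.val_succ, Fin.val_castSucc] at ih ⊢
    omega

instance : Finite (Walks n P) :=
  Finite.of_injective
    (fun w k => (⟨w.1 k, Nat.lt_succ_of_le ((w.apply_le k).trans k.is_le)⟩ : Fin (n + 1)))
    fun _ _ h => Subtype.ext <| funext fun k => congrArg Fin.val (congrFun h k)

def snocEquiv (i : ℕ) :
    Walks (n + 1) (· = i) ≃ Walks n (fun j => ((i : ℤ) - j).natAbs = 1) where
  toFun w := ⟨Fin.init w.1, w.2.1,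
    by simpa [← w.2.2.1, Fin.init] using w.2.2.2 (Fin.last n),
    fun k => by simpa [Fin.init] using w.2.2.2 k.castSucc⟩
  invFun v := ⟨Fin.snoc v.1 i, (Fin.snoc_castSucc (α := fun _ => ℕ) ..).trans v.2.1, by simp,
    Fin.forall_fin_succ'.2 ⟨fun k => by
      rw [Fin.succ_castSucc, Fin.snoc_castSucc, Fin.snoc_castSucc]; exact v.2.2.2 k,
      by simpa using v.2.2.1⟩⟩
  left_inv w := Subtype.ext <| by simp [← w.2.2.1]
  right_inv v := Subtype.ext <| by simp

def congrEnd (h : ∀ j, P j ↔ Q j) : Walks n P ≃ Walks n Q :=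
  Equiv.subtypeEquivRight fun w => by rw [h]

def sumEquiv [DecidablePred P] (h : ∀ j, P j → ¬Q j) :
    Walks n (fun j => P j ∨ Q j) ≃ Walks n P ⊕ Walks n Q where
  toFun w := if hP : P (w.1 (Fin.last n))
    then .inl ⟨w.1, w.2.1, hP, w.2.2.2⟩
    else .inr ⟨w.1, w.2.1, w.2.2.1.resolve_left hP, w.2.2.2⟩
  invFun := Sum.elim (fun w => ⟨w.1, w.2.1, .inl w.2.2.1, w.2.2.2⟩)
    (fun w => ⟨w.1, w.2.1, .inr w.2.2.1, w.2.2.2⟩)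
  left_inv w := by by_cases hP : P (w.1 (Fin.last n)) <;> simp [hP]
  right_inv := by
    rintro (w | w)
    · simp [w.2.2.1]
    · simpa using fun hP => h _ hP w.2.2.1

end Walks

theorem walkCount_eq_card (i n : ℕ) : walkCount i n = Nat.card (Walks n (· = i)) := rfl

theorem walkCount_zero_zero : walkCount 0 0 = 1 :=
  Nat.card_eq_one_iff_exists.2 ⟨⟨fun _ => 0, rfl, rfl, finZeroElim⟩,
    fun w => Subtype.ext <| funext fun k => by
      rw [Subsingleton.elim (α := Fin 1) k 0]; exact w.2.1⟩

theorem walkCount_eq_zero_of_lt {i n : ℕ} (h : n < i) : walkCount i n = 0 :=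
  Nat.card_eq_zero.2 <| .inl ⟨fun w : Walks n (· = i) => by
    have := w.apply_le (Fin.last n)
    rw [w.2.2.1, Fin.val_last] at this
    omega⟩

theorem walkCount_zero_succ (n : ℕ) : walkCount 0 (n + 1) = walkCount 1 n :=
  Nat.card_congr <| (Walks.snocEquiv 0).trans (Walks.congrEnd (Q := (· = 1)) fun j => by omega)

theorem walkCount_succ_succ (i n : ℕ) :
    walkCount (i + 1) (n + 1) = walkCount i n + walkCount (i + 2) n := by
  rw [walkCount_eq_card, Nat.card_congr (Walks.snocEquiv (i + 1)),
    Nat.card_congr (Walks.congrEnd (Q := fun j => j = i ∨ j = i + 2) fun j => by omega),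
    Nat.card_congr (Walks.sumEquiv fun j h => by omega), Nat.card_sum]
  rfl

variable {R : Type*} [CommRing R]

noncomputable def evalXZero : PowerSeries R[X] →+* PowerSeries R[X] :=
  map (Polynomial.C.comp Polynomial.constantCoeff)

@[simp]
theorem evalXZero_C_X : evalXZero (C Polynomial.X) = (0 : PowerSeries R[X]) := by
  simp [evalXZero]

@[simp]
theorem evalXZero_X : evalXZero X = (X : PowerSeries R[X]) :=
  map_X _

/-- The equation of the header multiplied by `X`; here `C Polynomial.X` is `X` and `X` is `t`. -/
def WalkEquation (F : PowerSeries R[X]) : Prop :=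
  C Polynomial.X * F = C Polynomial.X + X * ((C Polynomial.X ^ 2 + 1) * F - evalXZero F)

theorem WalkEquation.coeff_zero {F : PowerSeries R[X]} (hF : WalkEquation F) : coeff 0 F = 1 :=
  Polynomial.isRegular_X.left <| by simpa using congrArg (coeff 0) hF

theorem WalkEquation.coeff_succ {F : PowerSeries R[X]} (hF : WalkEquation F) (n : ℕ) :
    coeff (n + 1) F = Polynomial.X * coeff n F + (coeff n F).divX := by
  have h := congrArg (coeff (n + 1)) hF
  rw [← map_pow, coeff_C_mul, map_add, coeff_C, if_neg n.succ_ne_zero, zero_add, coeff_succ_X_mul,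
    map_sub, add_mul, one_mul, map_add, coeff_C_mul, evalXZero, coeff_map,
    RingHom.comp_apply, Polynomial.constantCoeff_apply] at h
  refine Polynomial.isRegular_X.left (h.trans ?_)
  linear_combination -Polynomial.X_mul_divX_add (coeff n F)

theorem coeff_coeff_walkGenFun (n j : ℕ) : (coeff n walkGenFun).coeff j = walkCount j n := by
  rw [walkGenFun, coeff_mk, Polynomial.finsetSum_coeff]
  simp only [Polynomial.coeff_C_mul_X_pow, Finset.sum_ite_eq, Finset.mem_range]
  split_ifs
  · rfl
  · rw [walkCount_eq_zero_of_lt (by omega), Nat.cast_zero]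

theorem coeff_zero_walkGenFun : coeff 0 walkGenFun = 1 := by
  ext (_ | j) <;> rw [coeff_coeff_walkGenFun]
  · simp [walkCount_zero_zero]
  · simp [walkCount_eq_zero_of_lt, Polynomial.coeff_one]

theorem coeff_succ_walkGenFun (n : ℕ) :
    coeff (n + 1) walkGenFun = Polynomial.X * coeff n walkGenFun + (coeff n walkGenFun).divX := by
  ext (_ | j) <;>
    simp [coeff_coeff_walkGenFun, Polynomial.coeff_X_mul, walkCount_zero_succ, walkCount_succ_succ]

theorem WalkEquation.eq_walkGenFun {F : PowerSeries ℚ[X]} (hF : WalkEquation F) :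
    F = walkGenFun := by
  ext n : 1
  induction n with
  | zero => rw [hF.coeff_zero, coeff_zero_walkGenFun]
  | succ n ih => rw [hF.coeff_succ, coeff_succ_walkGenFun, ih]

noncomputable def evenCatalanSeries : PowerSeries R[X] :=
  expand 2 two_ne_zero (map (Nat.castRingHom R[X]) catalanSeries)

theorem evenCatalanSeries_sq_mul_X_sq_add_one :
    evenCatalanSeries ^ 2 * X ^ 2 + 1 = (evenCatalanSeries : PowerSeries R[X]) := by
  simpa [evenCatalanSeries] using
    congrArg (fun φ => expand 2 two_ne_zero (map (Nat.castRingHom R[X]) φ))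
      catalanSeries_sq_mul_X_add_one

theorem evalXZero_evenCatalanSeries :
    evalXZero evenCatalanSeries = (evenCatalanSeries : PowerSeries R[X]) := by
  rw [evalXZero, evenCatalanSeries, map_expand, ← RingHom.comp_apply, ← map_comp,
    Subsingleton.elim ((Polynomial.C.comp _).comp _) (Nat.castRingHom R[X])]

theorem isUnit_one_sub_X_mul_evenCatalanSeries :
    IsUnit (1 - C Polynomial.X * X * evenCatalanSeries : PowerSeries R[X]) :=
  isUnit_iff_constantCoeff.2 (by simp)

noncomputable def catalanWalkSeries : PowerSeries R[X] :=
  evenCatalanSeries * (isUnit_one_sub_X_mul_evenCatalanSeries (R := R)).unit⁻¹.val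

theorem catalanWalkSeries_mul :
    catalanWalkSeries * (1 - C Polynomial.X * X * evenCatalanSeries) =
      (evenCatalanSeries : PowerSeries R[X]) := by
  rw [catalanWalkSeries, mul_assoc, IsUnit.val_inv_mul, mul_one]

theorem evalXZero_catalanWalkSeries :
    evalXZero catalanWalkSeries = (evenCatalanSeries : PowerSeries R[X]) := by
  simpa [evalXZero_evenCatalanSeries] using congrArg evalXZero (catalanWalkSeries_mul (R := R))

theorem walkEquation_catalanWalkSeries : WalkEquation (catalanWalkSeries : PowerSeries R[X]) := by
  rw [WalkEquation, evalXZero_catalanWalkSeries,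
    ← isUnit_one_sub_X_mul_evenCatalanSeries.mul_left_inj]
  linear_combination
    (C Polynomial.X - X * (C Polynomial.X ^ 2 + 1)) * catalanWalkSeries_mul (R := R) -
      C Polynomial.X * evenCatalanSeries_sq_mul_X_sq_add_one (R := R)

theorem catalanWalkSeries_algebraic :
    (C Polynomial.X * X - C Polynomial.X ^ 2 * X ^ 2 - X ^ 2) * catalanWalkSeries ^ 2 +
      (1 - 2 * C Polynomial.X * X) * catalanWalkSeries - 1 = (0 : PowerSeries R[X]) := by
  rw [← (isUnit_one_sub_X_mul_evenCatalanSeries.pow 2).mul_left_inj, zero_mul]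
  linear_combination ((C Polynomial.X * X - C Polynomial.X ^ 2 * X ^ 2 - X ^ 2) *
      (catalanWalkSeries * (1 - C Polynomial.X * X * evenCatalanSeries) + evenCatalanSeries) +
      (1 - 2 * C Polynomial.X * X) * (1 - C Polynomial.X * X * evenCatalanSeries)) *
      catalanWalkSeries_mul (R := R) - evenCatalanSeries_sq_mul_X_sq_add_one (R := R)

theorem walkGenFun_algebraic :
    ((PowerSeries.C (R := Polynomial ℚ) Polynomial.X) * PowerSeries.X -
        (PowerSeries.C (R := Polynomial ℚ) Polynomial.X) ^ 2 * PowerSeries.X ^ 2 -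
        PowerSeries.X ^ 2) * walkGenFun ^ 2 +
      (1 - 2 * (PowerSeries.C (R := Polynomial ℚ) Polynomial.X) * PowerSeries.X) * walkGenFun -
      1 = 0 := by
  rw [← walkEquation_catalanWalkSeries.eq_walkGenFun]
  exact catalanWalkSeries_algebraic
end

section
/- The sequence f(0,2n) satisfies the asymptotic formula f(0,2n) ∼ 4ⁿ·n^{−3/2}/√π as n → ∞; that is, the quotient f(0,2n)·√π·n^{3/2}/4ⁿ tends to 1 as n tends to infinity. -/
/-!
An excursion of length `2n` is determined by its sequence of up and down steps, and these
sequences are exactly the Dyck words of semilength `n`; hence `f(0, 2n)` is the Catalan number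
`C n = binom(2n, n) / (n + 1)`. Writing the factorials in `binom(2n, n)` through Stirling's
sequence `s(n) = n! / (√(2n) (n/e)ⁿ) → √π` gives
`binom(2n, n) * √n / 4ⁿ = s(2n) / s(n)² → 1 / √π`.
-/

open DyckStep Filter Real Stirling Topology
open scoped Nat

def dyckHeight (l : List DyckStep) : ℤ := l.count U - l.count D

@[simp] lemma dyckHeight_U : dyckHeight [U] = 1 := rfl

@[simp] lemma dyckHeight_D : dyckHeight [D] = -1 := rfl

lemma dyckHeight_append (l l' : List DyckStep) :
    dyckHeight (l ++ l') = dyckHeight l + dyckHeight l' := by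
  simp only [dyckHeight, List.count_append]
  push_cast
  ring

lemma dyckHeight_take_add_one {l : List DyckStep} {i : ℕ} (hi : i < l.length) :
    dyckHeight (l.take (i + 1)) = dyckHeight (l.take i) + dyckHeight [l[i]] := by
  rw [List.take_add_one, List.getElem?_eq_getElem hi, Option.toList_some, dyckHeight_append]

lemma natAbs_dyckHeight_singleton (s : DyckStep) : (dyckHeight [s]).natAbs = 1 := by
  cases s <;> rfl

/-- The step leading from height `a` to height `b`; only meaningful when `|b - a| = 1`. -/
def stepOf (a b : ℕ) : DyckStep := if a < b then U else D

lemma dyckHeight_stepOf {a b : ℕ} (h : ((b : ℤ) - a).natAbs = 1) :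
    dyckHeight [stepOf a b] = b - a := by
  unfold stepOf
  split_ifs <;> simp <;> omega

lemma stepOf_eq_of_sub_eq {a b : ℕ} {s : DyckStep} (h : (b : ℤ) - a = dyckHeight [s]) :
    stepOf a b = s := by
  unfold stepOf
  cases s <;> simp at h <;> simp <;> omega

def stepList {N : ℕ} (w : Fin (N + 1) → ℕ) : List DyckStep :=
  List.ofFn fun k : Fin N => stepOf (w k.castSucc) (w k.succ)

@[simp] lemma length_stepList {N : ℕ} (w : Fin (N + 1) → ℕ) : (stepList w).length = N := by
  simp [stepList]

lemma dyckHeight_take_stepList {N : ℕ} {w : Fin (N + 1) → ℕ}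
    (hw : ∀ k : Fin N, ((w k.succ : ℤ) - w k.castSucc).natAbs = 1) (k : Fin (N + 1)) :
    dyckHeight ((stepList w).take k) = w k - w 0 := by
  induction k using Fin.induction with
  | zero => simp [dyckHeight]
  | succ k ih =>
    rw [Fin.val_castSucc] at ih
    rw [Fin.val_succ, dyckHeight_take_add_one (by simp), ih]
    simp only [stepList, List.getElem_ofFn]
    rw [dyckHeight_stepOf (hw k)]
    ring

namespace DyckWord

def ofWalk {N : ℕ} (w : Fin (N + 1) → ℕ) (h0 : w 0 = 0) (hN : w (Fin.last N) = 0)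
    (hw : ∀ k : Fin N, ((w k.succ : ℤ) - w k.castSucc).natAbs = 1) : DyckWord where
  toList := stepList w
  count_U_eq_count_D := by
    have h := dyckHeight_take_stepList hw (Fin.last N)
    rw [Fin.val_last, List.take_of_length_le (by simp), hN, h0, dyckHeight] at h
    omega
  count_D_le_count_U i := by
    have h := dyckHeight_take_stepList hw ⟨min i N, by omega⟩
    rw [h0, dyckHeight] at h
    rw [List.take_eq_take_min, length_stepList]
    simp only at h
    omega

def height (p : DyckWord) (k : ℕ) : ℕ :=
  (p.toList.take k).count U - (p.toList.take k).count D

lemma natCast_height (p : DyckWord) (k : ℕ) :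
    (p.height k : ℤ) = dyckHeight (p.toList.take k) := by
  have := p.count_D_le_count_U k
  rw [height, dyckHeight]
  omega

@[simp] lemma height_zero (p : DyckWord) : p.height 0 = 0 := by simp [height]

lemma height_of_length_le (p : DyckWord) {k : ℕ} (hk : p.toList.length ≤ k) :
    p.height k = 0 := by
  rw [height, List.take_of_length_le hk, p.count_U_eq_count_D, Nat.sub_self]

lemma height_add_one_sub_height (p : DyckWord) {k : ℕ} (hk : k < p.toList.length) :
    (p.height (k + 1) : ℤ) - p.height k = dyckHeight [p.toList[k]] := by
  rw [natCast_height, natCast_height, dyckHeight_take_add_one hk]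
  ring

end DyckWord

abbrev Excursion (N : ℕ) :=
  {w : Fin (N + 1) → ℕ // w 0 = 0 ∧ w (Fin.last N) = 0 ∧
    ∀ k : Fin N, ((w k.succ : ℤ) - (w k.castSucc : ℤ)).natAbs = 1}

def excursionEquivDyckWord (N : ℕ) : Excursion N ≃ {p : DyckWord // p.toList.length = N} where
  toFun w := ⟨.ofWalk w.1 w.2.1 w.2.2.1 w.2.2.2, length_stepList w.1⟩
  invFun p := ⟨fun k => p.1.height k, p.1.height_zero, p.1.height_of_length_le p.2.le, fun k => by
    change ((p.1.height (k + 1) : ℤ) - p.1.height k).natAbs = 1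
    rw [p.1.height_add_one_sub_height (by omega)]
    exact natAbs_dyckHeight_singleton _⟩
  left_inv w := by
    ext k
    have h := dyckHeight_take_stepList w.2.2.2 k
    rw [w.2.1, Nat.cast_zero, sub_zero] at h
    exact_mod_cast (DyckWord.natCast_height (.ofWalk w.1 w.2.1 w.2.2.1 w.2.2.2) k).trans h
  right_inv p := by
    refine Subtype.ext (DyckWord.ext (List.ext_getElem (by simp [DyckWord.ofWalk, p.2]) ?_))
    intro i hi _
    simp only [DyckWord.ofWalk, stepList, List.getElem_ofFn]
    exact stepOf_eq_of_sub_eq (p.1.height_add_one_sub_height (by omega))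

theorem walkCount_zero_two_mul (n : ℕ) : walkCount 0 (2 * n) = catalan n := by
  have lengthEquiv :
      {p : DyckWord // p.toList.length = 2 * n} ≃ {p : DyckWord // p.semilength = n} :=
    Equiv.subtypeEquivRight fun p => by rw [← p.two_mul_semilength_eq_length]; omega
  rw [walkCount, Nat.card_congr ((excursionEquivDyckWord (2 * n)).trans lengthEquiv),
    Nat.card_eq_fintype_card, DyckWord.card_dyckWord_semilength_eq_catalan]

theorem centralBinom_mul_sqrt_div_four_pow {n : ℕ} (hn : n ≠ 0) :
    (n.centralBinom : ℝ) * √n / 4 ^ n = stirlingSeq (2 * n) / stirlingSeq n ^ 2 := by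
  have hfac : ((2 * n)! : ℝ) = n.centralBinom * (n ! * n !) := by
    rw [Nat.centralBinom, ← mul_assoc]
    exact_mod_cast (Nat.choose_mul_factorial_mul_factorial (by omega : n ≤ 2 * n)).symm.trans
      (by rw [show 2 * n - n = n by omega])
  have hsqrt : √(2 * ((2 * n : ℕ) : ℝ)) = 2 * √n := by
    push_cast
    rw [show 2 * (2 * (n : ℝ)) = 2 ^ 2 * n by ring, sqrt_mul (by positivity), sqrt_sq zero_le_two]
  have hn' : (0 : ℝ) < n := by positivity
  rw [stirlingSeq, stirlingSeq, hfac, hsqrt]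
  simp_rw [div_pow, mul_pow]
  rw [sq_sqrt (by positivity)]
  field_simp
  rw [sq_sqrt hn'.le, pow_mul, pow_mul]
  push_cast
  ring

theorem tendsto_centralBinom_mul_sqrt_div_four_pow :
    Tendsto (fun n : ℕ => (n.centralBinom : ℝ) * √n / 4 ^ n) atTop (𝓝 (√π)⁻¹) := by
  have hπ : (√π : ℝ) ≠ 0 := by positivity
  have hlim : Tendsto (fun n : ℕ => stirlingSeq (2 * n) / stirlingSeq n ^ 2) atTop
      (𝓝 (√π / √π ^ 2)) :=
    (tendsto_stirlingSeq_sqrt_pi.comp (tendsto_id.const_mul_atTop' two_pos)).div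
      (tendsto_stirlingSeq_sqrt_pi.pow 2) (pow_ne_zero 2 hπ)
  rw [show √π / √π ^ 2 = (√π)⁻¹ by field_simp] at hlim
  refine hlim.congr' ?_
  filter_upwards [eventually_ne_atTop 0] with n hn
  exact (centralBinom_mul_sqrt_div_four_pow hn).symm

theorem tendsto_catalan_mul_rpow_div_four_pow :
    Tendsto (fun n : ℕ => (catalan n : ℝ) * √π * (n : ℝ) ^ ((3 : ℝ) / 2) / 4 ^ n)
      atTop (𝓝 1) := by
  have hlim := (tendsto_centralBinom_mul_sqrt_div_four_pow.mul_const √π).mul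
    (tendsto_natCast_div_add_atTop (1 : ℝ))
  rw [inv_mul_cancel₀ (by positivity), one_mul] at hlim
  refine hlim.congr' ?_
  filter_upwards [eventually_ne_atTop 0] with n hn
  have hn' : (0 : ℝ) < n := by positivity
  have hcat : (n.centralBinom : ℝ) = (n + 1) * catalan n := by
    exact_mod_cast (succ_mul_catalan_eq_centralBinom n).symm
  rw [show (3 : ℝ) / 2 = 1 + 1 / 2 by norm_num, rpow_add hn', rpow_one, ← sqrt_eq_rpow, hcat]
  field_simp

open Filter in
theorem excursion_asymptotics :
    Tendsto
      (fun n : ℕ =>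
        (walkCount 0 (2 * n) : ℝ) * Real.sqrt Real.pi * (n : ℝ) ^ ((3 : ℝ) / 2) / 4 ^ n)
      atTop (nhds 1) := by
  simpa only [walkCount_zero_two_mul] using tendsto_catalan_mul_rpow_div_four_pow
end
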